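/- For η ∈ ℝ, the brackets [X₀,X₁]=2X₁, [X₀,X₂]=−2X₂, [X₁,X₂]=X₀, [x⁰,x¹]=−(η/2)x¹, [x⁰,x²]=−(η/2)x², [x¹,x²]=0, [x⁰,X₀]=0, [x⁰,X₁]=x²+(η/2)X₁, [x⁰,X₂]=−x¹+(η/2)X₂, [x¹,X₀]=2x¹, [x¹,X₁]=−2x⁰−(η/2)X₀, [x¹,X₂]=0, [x²,X₀]=−2x², [x²,X₁]=0, [x²,X₂]=2x⁰−(η/2)X₀ define a Lie algebra structure D on the 6-dimensional real vector space with basis {X₀,X₁,X₂,x⁰,x¹,x²} (the classical double D(sl(2,ℝ)) for the standard deformation), and the linear map ψ : g_{η²} → D determined by ψ(J)=−(1/2)(X₁−X₂), ψ(K₁)=(1/2)(X₁+X₂), ψ(K₂)=−(1/2)X₀, ψ(P₀)=−(η/2)(X₁+X₂)+x¹−x², ψ(P₁)=2x⁰, ψ(P₂)=(η/2)(X₁−X₂)+x¹+x² is a Lie algebra isomorphism. -/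

import Mathlib

/-!
Transport the bracket of `g_{η²}` to `ℝ⁶` along `ψ`. Antisymmetry and the Jacobi identity are then
inherited, `ψ` is a Lie algebra isomorphism by construction, and each of the fifteen structure
constants becomes a bracket identity in `g_{η²}` between the preimages `ψ⁻¹ X₀, …, ψ⁻¹ x²`.
These six vectors are explicit combinations of `J, …, K₂`, and conversely, so they form a basis
of `g_{η²}` whose coordinate map is `ψ`.
-/

open Submodule Set

namespace LinearEquiv

variable {R L V : Type*} [CommRing R] [LieRing L] [LieAlgebra R L] [AddCommGroup V] [Module R V]

noncomputable def transportLie (e : L ≃ₗ[R] V) : V →ₗ[R] V →ₗ[R] V :=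
  ((LieAlgebra.ad R L : L →ₗ[R] Module.End R L).compl₁₂
    (e.symm : V →ₗ[R] L) (e.symm : V →ₗ[R] L)).compr₂ (e : L →ₗ[R] V)

theorem transportLie_apply (e : L ≃ₗ[R] V) (u v : V) :
    e.transportLie u v = e ⁅e.symm u, e.symm v⁆ := rfl

theorem transportLie_self (e : L ≃ₗ[R] V) (v : V) : e.transportLie v v = 0 := by
  rw [transportLie_apply, lie_self, map_zero]

theorem transportLie_jacobi (e : L ≃ₗ[R] V) (u v w : V) :
    e.transportLie (e.transportLie u v) w + e.transportLie (e.transportLie v w) u +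
      e.transportLie (e.transportLie w u) v = 0 := by
  simp only [transportLie_apply, symm_apply_apply, ← map_add]
  set a := e.symm u
  set b := e.symm v
  set c := e.symm w
  rw [← lie_skew ⁅a, b⁆ c, ← lie_skew ⁅b, c⁆ a, ← lie_skew ⁅c, a⁆ b, ← map_zero e, ← neg_zero,
    ← lie_jacobi a b c]
  congr 1
  abel

theorem map_lie_eq_transportLie (e : L ≃ₗ[R] V) (x y : L) :
    e ⁅x, y⁆ = e.transportLie (e x) (e y) := by
  rw [transportLie_apply, symm_apply_apply, symm_apply_apply]

end LinearEquiv

namespace Module.Basis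

variable {R V ι : Type*} [Semiring R] [AddCommMonoid V] [Module R V] [Fintype ι]

noncomputable def ofMemSpan [OrzechProperty R] [StrongRankCondition R] (b : Basis ι R V)
    (w : ι → V) (h : ∀ i, b i ∈ span R (range w)) : Basis ι R V :=
  basisOfTopLeSpanOfCardEqFinrank w (b.span_eq ▸ span_le.2 (range_subset_iff.2 h))
    (finrank_eq_card_basis b).symm

@[simp]
theorem coe_ofMemSpan [OrzechProperty R] [StrongRankCondition R] (b : Basis ι R V)
    (w : ι → V) (h : ∀ i, b i ∈ span R (range w)) : ⇑(b.ofMemSpan w h) = w :=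
  coe_basisOfTopLeSpanOfCardEqFinrank _ _ _

theorem equivFun_eq_iff_linearCombination (b : Basis ι R V) {x : V} {c : ι → R} :
    b.equivFun x = c ↔ Fintype.linearCombination R b c = x := by
  rw [Fintype.linearCombination_apply, ← b.equivFun_symm_apply, LinearEquiv.symm_apply_eq, eq_comm]

end Module.Basis

section KinematicalAlgebra

variable {g : Type*} [LieRing g] [LieAlgebra ℝ g]

structure KinematicalRelations (ω : ℝ) (J P0 P1 P2 K1 K2 : g) : Prop where
  lie_J_P1 : ⁅J, P1⁆ = P2
  lie_J_P2 : ⁅J, P2⁆ = -P1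
  lie_J_K1 : ⁅J, K1⁆ = K2
  lie_J_K2 : ⁅J, K2⁆ = -K1
  lie_J_P0 : ⁅J, P0⁆ = 0
  lie_P1_K1 : ⁅P1, K1⁆ = -P0
  lie_P2_K2 : ⁅P2, K2⁆ = -P0
  lie_P1_K2 : ⁅P1, K2⁆ = 0
  lie_P2_K1 : ⁅P2, K1⁆ = 0
  lie_P0_K1 : ⁅P0, K1⁆ = -P1
  lie_P0_K2 : ⁅P0, K2⁆ = -P2
  lie_K1_K2 : ⁅K1, K2⁆ = -J
  lie_P0_P1 : ⁅P0, P1⁆ = ω • K1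
  lie_P0_P2 : ⁅P0, P2⁆ = ω • K2
  lie_P1_P2 : ⁅P1, P2⁆ = -(ω • J)

/-- The preimages of the basis `X₀, X₁, X₂, x⁰, x¹, x²` of the double under `ψ`, read off from
the inverse of the matrix of `ψ`. -/
noncomputable def doubleFrame (η : ℝ) (J P0 P1 P2 K1 K2 : g) : Fin 6 → g :=
  ![(-2 : ℝ) • K2, K1 - J, K1 + J, (1 / 2 : ℝ) • P1, (1 / 2 : ℝ) • (P0 + η • K1 + P2 + η • J),
    (1 / 2 : ℝ) • (P2 + η • J - P0 - η • K1)]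

theorem linearCombination_doubleFrame (η : ℝ) (J P0 P1 P2 K1 K2 : g) :
    let X0 : Fin 6 → ℝ := Pi.single 0 1
    let X1 : Fin 6 → ℝ := Pi.single 1 1
    let X2 : Fin 6 → ℝ := Pi.single 2 1
    let x0 : Fin 6 → ℝ := Pi.single 3 1
    let x1 : Fin 6 → ℝ := Pi.single 4 1
    let x2 : Fin 6 → ℝ := Pi.single 5 1
    let φ := Fintype.linearCombination ℝ (doubleFrame η J P0 P1 P2 K1 K2)
    φ (-((1 / 2 : ℝ) • (X1 - X2))) = J ∧ φ (-((η / 2) • (X1 + X2)) + x1 - x2) = P0 ∧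
      φ ((2 : ℝ) • x0) = P1 ∧ φ ((η / 2) • (X1 - X2) + x1 + x2) = P2 ∧
      φ ((1 / 2 : ℝ) • (X1 + X2)) = K1 ∧ φ (-((1 / 2 : ℝ) • X0)) = K2 := by
  refine ⟨?_, ?_, ?_, ?_, ?_, ?_⟩ <;>
    simp only [map_neg, map_smul, map_add, map_sub, Fintype.linearCombination_apply_single,
      doubleFrame, Matrix.cons_val] <;>
    module

theorem KinematicalRelations.lie_doubleFrame {η : ℝ} {J P0 P1 P2 K1 K2 : g}
    (h : KinematicalRelations (η ^ 2) J P0 P1 P2 K1 K2) :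
    let S := doubleFrame η J P0 P1 P2 K1 K2
    ⁅S 0, S 1⁆ = (2 : ℝ) • S 1 ∧ ⁅S 0, S 2⁆ = -((2 : ℝ) • S 2) ∧ ⁅S 1, S 2⁆ = S 0 ∧
      ⁅S 3, S 4⁆ = -((η / 2) • S 4) ∧ ⁅S 3, S 5⁆ = -((η / 2) • S 5) ∧ ⁅S 4, S 5⁆ = 0 ∧
      ⁅S 3, S 0⁆ = 0 ∧ ⁅S 3, S 1⁆ = S 5 + (η / 2) • S 1 ∧ ⁅S 3, S 2⁆ = -S 4 + (η / 2) • S 2 ∧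
      ⁅S 4, S 0⁆ = (2 : ℝ) • S 4 ∧ ⁅S 4, S 1⁆ = -((2 : ℝ) • S 3) - (η / 2) • S 0 ∧
      ⁅S 4, S 2⁆ = 0 ∧
      ⁅S 5, S 0⁆ = -((2 : ℝ) • S 5) ∧ ⁅S 5, S 1⁆ = 0 ∧
      ⁅S 5, S 2⁆ = (2 : ℝ) • S 3 - (η / 2) • S 0 := by
  have swap {x y z : g} (hxy : ⁅x, y⁆ = z) : ⁅y, x⁆ = -z := by rw [← lie_skew, hxy]
  obtain ⟨hJP1, hJP2, hJK1, hJK2, hJP0, hP1K1, hP2K2, hP1K2, hP2K1, hP0K1, hP0K2, hK1K2,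
    hP0P1, hP0P2, hP1P2⟩ := h
  refine ⟨?_, ?_, ?_, ?_, ?_, ?_, ?_, ?_, ?_, ?_, ?_, ?_, ?_, ?_, ?_⟩ <;>
    simp only [doubleFrame, Matrix.cons_val, lie_add, add_lie, lie_sub, sub_lie, lie_smul,
      smul_lie, lie_self, hJP2, hJK1, hJK2, hJP0, hP1K1, hP2K2, hP1K2, hP2K1, hP0K1, hP0K2, hK1K2,
      hP0P2, hP1P2, swap hJP1, swap hJP2, swap hJK1, swap hJK2, swap hJP0, swap hP2K1, swap hP0K1,
      swap hK1K2, swap hP0P1, swap hP0P2] <;>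
    module

end KinematicalAlgebra

theorem double_sl2_exists_and_iso
    (η : ℝ) (g : Type*) [LieRing g] [LieAlgebra ℝ g]
    (J P0 P1 P2 K1 K2 : g)
    (hind : LinearIndependent ℝ ![J, P0, P1, P2, K1, K2])
    (hspan : Submodule.span ℝ (Set.range ![J, P0, P1, P2, K1, K2]) = ⊤)
    (hJP1 : ⁅J, P1⁆ = P2) (hJP2 : ⁅J, P2⁆ = -P1)
    (hJK1 : ⁅J, K1⁆ = K2) (hJK2 : ⁅J, K2⁆ = -K1) (hJP0 : ⁅J, P0⁆ = 0)
    (hP1K1 : ⁅P1, K1⁆ = -P0) (hP2K2 : ⁅P2, K2⁆ = -P0)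
    (hP1K2 : ⁅P1, K2⁆ = 0) (hP2K1 : ⁅P2, K1⁆ = 0)
    (hP0K1 : ⁅P0, K1⁆ = -P1) (hP0K2 : ⁅P0, K2⁆ = -P2)
    (hK1K2 : ⁅K1, K2⁆ = -J)
    (hP0P1 : ⁅P0, P1⁆ = (η ^ 2) • K1) (hP0P2 : ⁅P0, P2⁆ = (η ^ 2) • K2)
    (hP1P2 : ⁅P1, P2⁆ = -((η ^ 2) • J)) :
    let X0 : Fin 6 → ℝ := Pi.single 0 1
    let X1 : Fin 6 → ℝ := Pi.single 1 1
    let X2 : Fin 6 → ℝ := Pi.single 2 1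
    let x0 : Fin 6 → ℝ := Pi.single 3 1
    let x1 : Fin 6 → ℝ := Pi.single 4 1
    let x2 : Fin 6 → ℝ := Pi.single 5 1
    ∃ br : (Fin 6 → ℝ) →ₗ[ℝ] (Fin 6 → ℝ) →ₗ[ℝ] (Fin 6 → ℝ),
      -- the bracket is alternating and satisfies the Jacobi identity
      (∀ v, br v v = 0) ∧
      (∀ u v w, br (br u v) w + br (br v w) u + br (br w u) v = 0) ∧
      -- the defining structure constants
      br X0 X1 = (2 : ℝ) • X1 ∧ br X0 X2 = -((2 : ℝ) • X2) ∧ br X1 X2 = X0 ∧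
      br x0 x1 = -((η / 2) • x1) ∧ br x0 x2 = -((η / 2) • x2) ∧ br x1 x2 = 0 ∧
      br x0 X0 = 0 ∧ br x0 X1 = x2 + (η / 2) • X1 ∧ br x0 X2 = -x1 + (η / 2) • X2 ∧
      br x1 X0 = (2 : ℝ) • x1 ∧ br x1 X1 = -((2 : ℝ) • x0) - (η / 2) • X0 ∧
      br x1 X2 = 0 ∧
      br x2 X0 = -((2 : ℝ) • x2) ∧ br x2 X1 = 0 ∧
      br x2 X2 = (2 : ℝ) • x0 - (η / 2) • X0 ∧
      -- and ψ is a Lie algebra isomorphism from g_{η²} onto this Lie algebra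
      ∃ ψ : g →ₗ[ℝ] (Fin 6 → ℝ),
        Function.Bijective ψ ∧
        (∀ u v : g, ψ ⁅u, v⁆ = br (ψ u) (ψ v)) ∧
        ψ J = -((1 / 2 : ℝ) • (X1 - X2)) ∧
        ψ K1 = (1 / 2 : ℝ) • (X1 + X2) ∧
        ψ K2 = -((1 / 2 : ℝ) • X0) ∧
        ψ P0 = -((η / 2) • (X1 + X2)) + x1 - x2 ∧
        ψ P1 = (2 : ℝ) • x0 ∧
        ψ P2 = (η / 2) • (X1 - X2) + x1 + x2 := by
  intro X0 X1 X2 x0 x1 x2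
  obtain ⟨hJ, hP0, hP1, hP2, hK1, hK2⟩ := linearCombination_doubleFrame η J P0 P1 P2 K1 K2
  obtain ⟨h01, h02, h12, h34, h35, h45, h30, h31, h32, h40, h41, h42, h50, h51, h52⟩ :=
    KinematicalRelations.lie_doubleFrame ⟨hJP1, hJP2, hJK1, hJK2, hJP0, hP1K1, hP2K2, hP1K2,
      hP2K1, hP0K1, hP0K2, hK1K2, hP0P1, hP0P2, hP1P2⟩
  set S := doubleFrame η J P0 P1 P2 K1 K2
  have hmem (i : Fin 6) : Module.Basis.mk hind hspan.ge i ∈ span ℝ (range S) := by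
    rw [← Fintype.range_linearCombination, Module.Basis.mk_apply, LinearMap.mem_range]
    fin_cases i
    exacts [⟨_, hJ⟩, ⟨_, hP0⟩, ⟨_, hP1⟩, ⟨_, hP2⟩, ⟨_, hK1⟩, ⟨_, hK2⟩]
  set ψ := ((Module.Basis.mk hind hspan.ge).ofMemSpan S hmem).equivFun
  have hψ {x : g} {c : Fin 6 → ℝ} (h : Fintype.linearCombination ℝ S c = x) : ψ x = c := by
    rwa [Module.Basis.equivFun_eq_iff_linearCombination, Module.Basis.coe_ofMemSpan]
  have hψS (i : Fin 6) : ψ (S i) = Pi.single i 1 :=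
    hψ (by rw [Fintype.linearCombination_apply_single, one_smul])
  have hψsymm (i : Fin 6) : ψ.symm (Pi.single i 1) = S i := by rw [← hψS, ψ.symm_apply_apply]
  refine ⟨ψ.transportLie, ψ.transportLie_self, ψ.transportLie_jacobi,
    ?_, ?_, ?_, ?_, ?_, ?_, ?_, ?_, ?_, ?_, ?_, ?_, ?_, ?_, ?_, ψ.toLinearMap,
    ψ.bijective, ψ.map_lie_eq_transportLie, hψ hJ, hψ hK1, hψ hK2, hψ hP0, hψ hP1, hψ hP2⟩
  all_goals
    simp only [X0, X1, X2, x0, x1, x2, LinearEquiv.transportLie_apply, hψsymm, h01, h02, h12, h34,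
      h35, h45, h30, h31, h32, h40, h41, h42, h50, h51, h52, map_add, map_sub, map_neg, map_smul,
      map_zero, hψS]
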